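/- arXiv:1911.10957 — 2 statements merged into one kernel-verified Lean document; each statement's English description precedes it below -/
import Mathlib

section
/- Let n ≥ 2, let w be a permutation of {1,…,n}, and let 1 ≤ i < j ≤ n. Then w → w(i,j) is an edge of the quantum Bruhat graph QBG(S_n), i.e. ℓ(w(i,j)) = ℓ(w) + 1 or ℓ(w(i,j)) = ℓ(w) − 2(j−i) + 1, if and only if there is no k with i < k < j and w(i) ≺ w(k) ≺ w(j) in the circular order. -/
/-- The number of inversions of a permutation of `Fin n`; this equals the Coxeter length. -/
def invNum {n : ℕ} (w : Equiv.Perm (Fin n)) : ℕ :=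
  (Finset.univ.filter (fun p : Fin n × Fin n => p.1 < p.2 ∧ w p.2 < w p.1)).card

/-- `circBetween b c d` says that `c` lies strictly between `b` and `d` in the circular
order `≺_b` starting at `b` (i.e. `b ≺ c ≺ d`). -/
def circBetween {n : ℕ} (b c d : Fin n) : Prop :=
  0 < ((c - b : Fin n) : ℕ) ∧ ((c - b : Fin n) : ℕ) < ((d - b : Fin n) : ℕ)

namespace QBGproof

open Finset Equiv

variable {n : ℕ}

lemma mod_helper {x y : ℕ} (hx : x < n) (hy : y < n) :
    (n - x + y) % n = if x ≤ y then y - x else n - x + y := by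
  split_ifs with h
  · have hxy : n - x + y = n + (y - x) := by omega
    rw [hxy, Nat.add_mod_left, Nat.mod_eq_of_lt (by omega)]
  · exact Nat.mod_eq_of_lt (by omega)

lemma sub_val (a b : Fin n) : ((a - b : Fin n) : ℕ) = (n - (b : ℕ) + (a : ℕ)) % n := by
  rw [Fin.sub_def]

lemma circ_iff_lt {b c d : Fin n} (hbd : b < d) (hbc : b ≠ c) (hcd : c ≠ d) :
    circBetween b c d ↔ (b < c ∧ c < d) := by
  have h4 : (b : ℕ) ≠ (c : ℕ) := fun h => hbc (Fin.ext h)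
  have h5 : (c : ℕ) ≠ (d : ℕ) := fun h => hcd (Fin.ext h)
  have hbd' : (b : ℕ) < (d : ℕ) := hbd
  have h2 : (c : ℕ) < n := c.isLt
  have h3 : (d : ℕ) < n := d.isLt
  unfold circBetween
  rw [sub_val, sub_val, mod_helper b.isLt h2, mod_helper b.isLt h3, Fin.lt_def, Fin.lt_def]
  split_ifs <;> omega

lemma circ_iff_gt {b c d : Fin n} (hdb : d < b) (hbc : b ≠ c) (hcd : c ≠ d) :
    circBetween b c d ↔ ¬ (d < c ∧ c < b) := by
  have h4 : (b : ℕ) ≠ (c : ℕ) := fun h => hbc (Fin.ext h)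
  have h5 : (c : ℕ) ≠ (d : ℕ) := fun h => hcd (Fin.ext h)
  have hdb' : (d : ℕ) < (b : ℕ) := hdb
  have h2 : (c : ℕ) < n := c.isLt
  have h3 : (d : ℕ) < n := d.isLt
  unfold circBetween
  rw [sub_val, sub_val, mod_helper b.isLt h2, mod_helper b.isLt h3, Fin.lt_def, Fin.lt_def]
  split_ifs <;> omega

/-- The local contribution to the change of the inversion number. -/
def gg (w : Equiv.Perm (Fin n)) (i j a b : Fin n) : ℤ :=
  (if Equiv.swap i j a < Equiv.swap i j b ∧ w b < w a then 1 else 0)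
  - (if a < b ∧ w b < w a then 1 else 0)

lemma gg_eq_zero {w : Equiv.Perm (Fin n)} {i j a b : Fin n}
    (h : Equiv.swap i j a < Equiv.swap i j b ↔ a < b) : gg w i j a b = 0 := by
  unfold gg
  simp [h]

lemma swap_lt_iff_of_outside {i j a b : Fin n} (hij : i < j) (hai : a ≠ i) (haj : a ≠ j)
    (ha : ¬ (i < a ∧ a < j)) :
    Equiv.swap i j a < Equiv.swap i j b ↔ a < b := by
  have h1 : (a : ℕ) ≠ (i : ℕ) := fun h => hai (Fin.ext h)
  have h2 : (a : ℕ) ≠ (j : ℕ) := fun h => haj (Fin.ext h)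
  have h3 : ¬ ((i : ℕ) < (a : ℕ) ∧ (a : ℕ) < (j : ℕ)) := by
    intro hh; exact ha ⟨hh.1, hh.2⟩
  have hij' : (i : ℕ) < (j : ℕ) := hij
  rw [Equiv.swap_apply_def, Equiv.swap_apply_def]
  split_ifs <;> subst_vars <;> omega

lemma swap_lt_iff_i_left {i j b : Fin n} (hij : i < j) (hb : b = i ∨ (¬ (i < b ∧ b < j) ∧ b ≠ j)) :
    Equiv.swap i j i < Equiv.swap i j b ↔ i < b := by
  rcases hb with rfl | ⟨hb1, hb2⟩
  · simp
  · have h2 : (b : ℕ) ≠ (j : ℕ) := fun h => hb2 (Fin.ext h)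
    have h3 : ¬ ((i : ℕ) < (b : ℕ) ∧ (b : ℕ) < (j : ℕ)) := by
      intro hh; exact hb1 ⟨hh.1, hh.2⟩
    have hij' : (i : ℕ) < (j : ℕ) := hij
    rw [Equiv.swap_apply_def, Equiv.swap_apply_def]
    split_ifs <;> subst_vars <;> omega

lemma swap_lt_iff_j_left {i j b : Fin n} (hij : i < j) (hb : b = j ∨ (¬ (i < b ∧ b < j) ∧ b ≠ i)) :
    Equiv.swap i j j < Equiv.swap i j b ↔ j < b := by
  rcases hb with rfl | ⟨hb1, hb2⟩
  · simp
  · have h2 : (b : ℕ) ≠ (i : ℕ) := fun h => hb2 (Fin.ext h)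
    have h3 : ¬ ((i : ℕ) < (b : ℕ) ∧ (b : ℕ) < (j : ℕ)) := by
      intro hh; exact hb1 ⟨hh.1, hh.2⟩
    have hij' : (i : ℕ) < (j : ℕ) := hij
    rw [Equiv.swap_apply_def, Equiv.swap_apply_def]
    split_ifs <;> subst_vars <;> omega

lemma swap_lt_iff_mid {i j a b : Fin n} (hia : i < a) (haj : a < j)
    (hbi : b ≠ i) (hbj : b ≠ j) :
    Equiv.swap i j a < Equiv.swap i j b ↔ a < b := by
  have h1 : (b : ℕ) ≠ (i : ℕ) := fun h => hbi (Fin.ext h)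
  have h2 : (b : ℕ) ≠ (j : ℕ) := fun h => hbj (Fin.ext h)
  have hia' : (i : ℕ) < (a : ℕ) := hia
  have haj' : (a : ℕ) < (j : ℕ) := haj
  rw [Equiv.swap_apply_def, Equiv.swap_apply_def]
  split_ifs <;> subst_vars <;> omega

lemma invNum_cast (w : Equiv.Perm (Fin n)) :
    (invNum w : ℤ)
      = ∑ p : Fin n × Fin n, (if p.1 < p.2 ∧ w p.2 < w p.1 then (1 : ℤ) else 0) := by
  rw [invNum, Finset.card_filter]
  push_cast
  rfl

lemma diff_eq (w : Equiv.Perm (Fin n)) {i j : Fin n} (hij : i < j) :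
    (invNum (w * Equiv.swap i j) : ℤ) - (invNum w : ℤ)
      = gg w i j i j + gg w i j j i
        + ∑ k ∈ Finset.Ioo i j,
            (gg w i j i k + gg w i j j k + gg w i j k i + gg w i j k j) := by
  have hswap : (invNum (w * Equiv.swap i j) : ℤ)
      = ∑ p : Fin n × Fin n,
          (if Equiv.swap i j p.1 < Equiv.swap i j p.2 ∧ w p.2 < w p.1 then (1 : ℤ) else 0) := by
    rw [invNum_cast]
    refine (Fintype.sum_equiv ((Equiv.swap i j).prodCongr (Equiv.swap i j)) _ _ (fun p => ?_)).symm
    simp [Equiv.Perm.mul_apply, Equiv.swap_apply_self]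
  have key : (invNum (w * Equiv.swap i j) : ℤ) - (invNum w : ℤ)
      = ∑ a : Fin n, ∑ b : Fin n, gg w i j a b := by
    rw [hswap, invNum_cast, ← Finset.sum_sub_distrib, Fintype.sum_prod_type]
    rfl
  rw [key]
  have hiIoo : i ∉ Finset.Ioo i j := by simp
  have hjIoo : j ∉ Finset.Ioo i j := by simp
  have hins : i ∉ insert j (Finset.Ioo i j) := by
    simp only [Finset.mem_insert, Finset.mem_Ioo]
    push_neg
    exact ⟨hij.ne, fun h => absurd h (lt_irrefl i)⟩
  -- restrict the outer sum
  have houter : ∑ a : Fin n, ∑ b : Fin n, gg w i j a b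
      = ∑ a ∈ insert i (insert j (Finset.Ioo i j)), ∑ b : Fin n, gg w i j a b := by
    refine (Finset.sum_subset (Finset.subset_univ _) ?_).symm
    intro a _ ha
    simp only [Finset.mem_insert, Finset.mem_Ioo] at ha
    push_neg at ha
    obtain ⟨ha1, ha2, ha3⟩ := ha
    refine Finset.sum_eq_zero (fun b _ => gg_eq_zero ?_)
    exact swap_lt_iff_of_outside hij ha1 ha2 (fun h => absurd (ha3 h.1) (not_le.mpr h.2))
  rw [houter, Finset.sum_insert hins, Finset.sum_insert hjIoo]
  -- inner sums for a = i
  have hfi : ∑ b : Fin n, gg w i j i b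
      = gg w i j i j + ∑ b ∈ Finset.Ioo i j, gg w i j i b := by
    rw [← Finset.sum_insert hjIoo]
    refine (Finset.sum_subset (Finset.subset_univ _) ?_).symm
    intro b _ hb
    simp only [Finset.mem_insert, Finset.mem_Ioo] at hb
    push_neg at hb
    obtain ⟨hb1, hb2⟩ := hb
    refine gg_eq_zero (swap_lt_iff_i_left hij ?_)
    rcases eq_or_ne b i with rfl | hbi
    · exact Or.inl rfl
    · exact Or.inr ⟨fun h => absurd (hb2 h.1) (not_le.mpr h.2), hb1⟩
  have hfj : ∑ b : Fin n, gg w i j j b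
      = gg w i j j i + ∑ b ∈ Finset.Ioo i j, gg w i j j b := by
    rw [← Finset.sum_insert hiIoo]
    refine (Finset.sum_subset (Finset.subset_univ _) ?_).symm
    intro b _ hb
    simp only [Finset.mem_insert, Finset.mem_Ioo] at hb
    push_neg at hb
    obtain ⟨hb1, hb2⟩ := hb
    refine gg_eq_zero (swap_lt_iff_j_left hij ?_)
    rcases eq_or_ne b j with rfl | hbj
    · exact Or.inl rfl
    · exact Or.inr ⟨fun h => absurd (hb2 h.1) (not_le.mpr h.2), hb1⟩
  have hfk : ∀ k ∈ Finset.Ioo i j, ∑ b : Fin n, gg w i j k b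
      = gg w i j k i + gg w i j k j := by
    intro k hk
    rw [Finset.mem_Ioo] at hk
    have hijne : i ≠ j := hij.ne
    have : ∑ b : Fin n, gg w i j k b = ∑ b ∈ ({i, j} : Finset (Fin n)), gg w i j k b := by
      refine (Finset.sum_subset (Finset.subset_univ _) ?_).symm
      intro b _ hb
      simp only [Finset.mem_insert, Finset.mem_singleton] at hb
      push_neg at hb
      exact gg_eq_zero (swap_lt_iff_mid hk.1 hk.2 hb.1 hb.2)
    rw [this, Finset.sum_pair hijne]
  rw [hfi, hfj, Finset.sum_congr rfl hfk]
  have hsplit : ∑ k ∈ Finset.Ioo i j,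
      (gg w i j i k + gg w i j j k + gg w i j k i + gg w i j k j)
      = (∑ k ∈ Finset.Ioo i j, gg w i j i k) + (∑ k ∈ Finset.Ioo i j, gg w i j j k)
        + ∑ k ∈ Finset.Ioo i j, (gg w i j k i + gg w i j k j) := by
    rw [← Finset.sum_add_distrib, ← Finset.sum_add_distrib]
    exact Finset.sum_congr rfl (fun k _ => by ring)
  rw [hsplit]
  ring

lemma gg_pair (w : Equiv.Perm (Fin n)) {i j : Fin n} (hij : i < j) :
    gg w i j i j + gg w i j j i = if w i < w j then 1 else -1 := by
  have h1 : ¬ (j < i) := lt_asymm hij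
  have hwij : w i ≠ w j := fun h => hij.ne (w.injective h)
  rcases lt_or_gt_of_ne hwij with h | h
  · simp [gg, Equiv.swap_apply_left, Equiv.swap_apply_right, hij, h1, h, lt_asymm h]
  · simp [gg, Equiv.swap_apply_left, Equiv.swap_apply_right, hij, h1, h, lt_asymm h]

lemma gg_mid (w : Equiv.Perm (Fin n)) {i j k : Fin n} (hik : i < k) (hkj : k < j) :
    gg w i j i k + gg w i j j k + gg w i j k i + gg w i j k j
      = (if w k < w j then (1 : ℤ) else 0) + (if w i < w k then 1 else 0)
        - (if w k < w i then 1 else 0) - (if w j < w k then 1 else 0) := by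
  have hij : i < j := hik.trans hkj
  have hswapk : Equiv.swap i j k = k := Equiv.swap_apply_of_ne_of_ne hik.ne' hkj.ne
  simp only [gg, hswapk, Equiv.swap_apply_left, Equiv.swap_apply_right]
  simp [hik, hkj, hij, lt_asymm hik, lt_asymm hkj, lt_asymm hij]
  ring

lemma mid_val_lt (w : Equiv.Perm (Fin n)) {i j k : Fin n} (hik : i < k) (hkj : k < j)
    (h : w i < w j) :
    (if w k < w j then (1 : ℤ) else 0) + (if w i < w k then 1 else 0)
        - (if w k < w i then 1 else 0) - (if w j < w k then 1 else 0)
      = if w i < w k ∧ w k < w j then 2 else 0 := by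
  have h1 : (w i : ℕ) ≠ (w k : ℕ) := fun hh => hik.ne (w.injective (Fin.ext hh))
  have h2 : (w k : ℕ) ≠ (w j : ℕ) := fun hh => hkj.ne (w.injective (Fin.ext hh))
  have h' : (w i : ℕ) < (w j : ℕ) := h
  simp only [Fin.lt_def]
  split_ifs <;> omega

lemma mid_val_gt (w : Equiv.Perm (Fin n)) {i j k : Fin n} (hik : i < k) (hkj : k < j)
    (h : w j < w i) :
    (if w k < w j then (1 : ℤ) else 0) + (if w i < w k then 1 else 0)
        - (if w k < w i then 1 else 0) - (if w j < w k then 1 else 0)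
      = if w j < w k ∧ w k < w i then -2 else 0 := by
  have h1 : (w i : ℕ) ≠ (w k : ℕ) := fun hh => hik.ne (w.injective (Fin.ext hh))
  have h2 : (w k : ℕ) ≠ (w j : ℕ) := fun hh => hkj.ne (w.injective (Fin.ext hh))
  have h' : (w j : ℕ) < (w i : ℕ) := h
  simp only [Fin.lt_def]
  split_ifs <;> omega

end QBGproof

open QBGproof in
/-- For a permutation `w` of `{1,…,n}` and `1 ≤ i < j ≤ n`,
`w → w(i,j)` is an edge of the quantum Bruhat graph, i.e. `ℓ(w(i,j)) = ℓ(w) + 1` or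
`ℓ(w(i,j)) = ℓ(w) − 2(j−i) + 1`, if and only if there is no `k` with `i < k < j` and
`w(i) ≺ w(k) ≺ w(j)` in the circular order. -/
theorem quantum_bruhat_edge_criterion_typeA {n : ℕ} (hn : 2 ≤ n)
    (w : Equiv.Perm (Fin n)) (i j : Fin n) (hij : i < j) :
    ((invNum (w * Equiv.swap i j) : ℤ) = (invNum w : ℤ) + 1 ∨
      (invNum (w * Equiv.swap i j) : ℤ) = (invNum w : ℤ) - 2 * ((j : ℤ) - (i : ℤ)) + 1) ↔
    ¬ ∃ k : Fin n, i < k ∧ k < j ∧ circBetween (w i) (w k) (w j) := by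
  have hij' : (i : ℕ) < (j : ℕ) := hij
  have hijZ : (i : ℤ) < (j : ℤ) := by exact_mod_cast hij'
  have hwne : w i ≠ w j := fun h => hij.ne (w.injective h)
  have hD := diff_eq w hij
  rw [gg_pair w hij] at hD
  have hcard : (Finset.Ioo i j).card = (j : ℕ) - (i : ℕ) - 1 := by
    rw [Fin.card_Ioo]
  rcases lt_or_gt_of_ne hwne with hw | hw
  · -- case w i < w j
    rw [if_pos hw] at hD
    have hsum : ∑ k ∈ Finset.Ioo i j,
        (gg w i j i k + gg w i j j k + gg w i j k i + gg w i j k j)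
        = 2 * (((Finset.Ioo i j).filter (fun k => w i < w k ∧ w k < w j)).card : ℤ) := by
      have : ∀ k ∈ Finset.Ioo i j,
          gg w i j i k + gg w i j j k + gg w i j k i + gg w i j k j
            = if w i < w k ∧ w k < w j then (2 : ℤ) else 0 := by
        intro k hk
        rw [Finset.mem_Ioo] at hk
        rw [gg_mid w hk.1 hk.2, mid_val_lt w hk.1 hk.2 hw]
      rw [Finset.sum_congr rfl this, ← Finset.sum_filter, Finset.sum_const, nsmul_eq_mul]
      ring
    rw [hsum] at hD
    set m := ((Finset.Ioo i j).filter (fun k => w i < w k ∧ w k < w j)).card with hm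
    have hmz : (0 : ℤ) ≤ (m : ℤ) := Int.natCast_nonneg _
    constructor
    · rintro (h | h) ⟨k, hk1, hk2, hc⟩
      · have hm0 : m = 0 := by omega
        have hk : k ∈ (Finset.Ioo i j).filter (fun k => w i < w k ∧ w k < w j) := by
          rw [Finset.mem_filter, Finset.mem_Ioo]
          refine ⟨⟨hk1, hk2⟩, ?_⟩
          exact (circ_iff_lt hw (w.injective.ne hk1.ne) (w.injective.ne hk2.ne)).mp hc
        have he : (Finset.Ioo i j).filter (fun k => w i < w k ∧ w k < w j) = ∅ :=
          Finset.card_eq_zero.mp (hm ▸ hm0)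
        rw [he] at hk
        exact absurd hk (Finset.notMem_empty k)
      · omega
    · intro h
      left
      have hm0 : m = 0 := by
        rw [hm, Finset.card_eq_zero, Finset.filter_eq_empty_iff]
        intro k hk hP
        rw [Finset.mem_Ioo] at hk
        exact h ⟨k, hk.1, hk.2,
          (circ_iff_lt hw (w.injective.ne hk.1.ne) (w.injective.ne hk.2.ne)).mpr hP⟩
      rw [hm0] at hD
      omega
  · -- case w j < w i
    rw [if_neg (lt_asymm hw)] at hD
    have hsum : ∑ k ∈ Finset.Ioo i j,
        (gg w i j i k + gg w i j j k + gg w i j k i + gg w i j k j)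
        = -2 * (((Finset.Ioo i j).filter (fun k => w j < w k ∧ w k < w i)).card : ℤ) := by
      have : ∀ k ∈ Finset.Ioo i j,
          gg w i j i k + gg w i j j k + gg w i j k i + gg w i j k j
            = if w j < w k ∧ w k < w i then (-2 : ℤ) else 0 := by
        intro k hk
        rw [Finset.mem_Ioo] at hk
        rw [gg_mid w hk.1 hk.2, mid_val_gt w hk.1 hk.2 hw]
      rw [Finset.sum_congr rfl this, ← Finset.sum_filter, Finset.sum_const, nsmul_eq_mul]
      ring
    rw [hsum] at hD
    set m := ((Finset.Ioo i j).filter (fun k => w j < w k ∧ w k < w i)).card with hm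
    have hmle : m ≤ (Finset.Ioo i j).card := Finset.card_filter_le _ _
    rw [hcard] at hmle
    have hmz : (0 : ℤ) ≤ (m : ℤ) := Int.natCast_nonneg _
    constructor
    · rintro (h | h) ⟨k, hk1, hk2, hc⟩
      · omega
      · -- m = j - i - 1, so every k in Ioo satisfies w j < w k < w i
        have hmfull : m = (Finset.Ioo i j).card := by
          rw [hcard]
          omega
        have hall := Finset.filter_card_eq (hm ▸ hmfull) k (Finset.mem_Ioo.mpr ⟨hk1, hk2⟩)
        exact (circ_iff_gt hw (w.injective.ne hk1.ne) (w.injective.ne hk2.ne)).mp hc hall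
    · intro h
      right
      have hmfull : m = (Finset.Ioo i j).card := by
        rw [hm]
        congr 1
        refine Finset.filter_true_of_mem ?_
        intro k hk
        rw [Finset.mem_Ioo] at hk
        by_contra hP
        exact h ⟨k, hk.1, hk.2,
          (circ_iff_gt hw (w.injective.ne hk.1.ne) (w.injective.ne hk.2.ne)).mpr hP⟩
      rw [hmfull, hcard] at hD
      omega
end

section
/- Let n ≥ 1 and let C be a strictly increasing column with entries in the type C_n alphabet [n̄] = {1 < ⋯ < n < n̄ < ⋯ < 1̄}. Then C can be split (in the sense of Lecouvey's splitting procedure) if and only if C is a Kashiwara–Nakashima column of type C_n, i.e. for every unbarred letter z such that both z and z̄ appear in C, if z is in the a-th box from the top of C and z̄ is in the b-th box from the bottom of C, then a + b ≤ z. -/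
/-- Letters of the type `C_n` alphabet `[n̄] = {1 < ⋯ < n < n̄ < ⋯ < 1̄}` are encoded as
nonzero integers: the unbarred letter `i` is `i` and the barred letter `ī` is `−i`.
`rk` gives the rank of a letter in the total order (`1,…,n` get ranks `1,…,n`, and
`n̄,…,1̄` get ranks `n+1,…,2n`). -/
def rk (n : ℕ) (x : ℤ) : ℤ := if 0 < x then x else 2 * (n : ℤ) + 1 + x

/-- `x` is a letter of the alphabet `[n̄]`. -/
def isLetter (n : ℕ) (x : ℤ) : Prop := 1 ≤ |x| ∧ |x| ≤ (n : ℤ)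

/-- A column: a strictly increasing (top to bottom) sequence of letters of `[n̄]`. -/
def isColumn (n : ℕ) (C : List ℤ) : Prop :=
  (∀ x ∈ C, isLetter n x) ∧ C.Chain' (fun a b => rk n a < rk n b)

/-- The set `I = {z_1 > ⋯ > z_r}` of unbarred letters `z` such that both `z` and `z̄`
occur in `C`, listed in decreasing order. -/
def pairedLetters (n : ℕ) (C : List ℤ) : List ℤ :=
  (((List.range n).map (fun v => (v + 1 : ℤ))).filter (fun z => z ∈ C ∧ -z ∈ C)).reverse

/-- `canSplitFrom n C prev zs` expresses the greedy choice in Lecouvey's splitting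
procedure: for the successive letters `z` of `zs` there exist letters `t`, each the
greatest letter of `{1,…,n}` with `t < min(previous t, z)`, `t ∉ C` and `t̄ ∉ C`. -/
def canSplitFrom (n : ℕ) (C : List ℤ) : ℤ → List ℤ → Prop
  | _, [] => True
  | prev, z :: zs =>
      ∃ t : ℤ, (1 ≤ t ∧ t ≤ (n : ℤ) ∧ t < prev ∧ t < z ∧ t ∉ C ∧ -t ∉ C) ∧
        (∀ t' : ℤ, 1 ≤ t' → t' ≤ (n : ℤ) → t' < prev → t' < z → t' ∉ C → -t' ∉ C →
          t' ≤ t) ∧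
        canSplitFrom n C t zs

/-- The column `C` can be split, in the sense of Lecouvey's splitting procedure. -/
def canSplit (n : ℕ) (C : List ℤ) : Prop :=
  canSplitFrom n C ((n : ℤ) + 1) (pairedLetters n C)

/- ## auxiliary development -/

noncomputable def Fr (C : List ℤ) (m : ℤ) : ℕ :=
  ((Finset.Icc 1 m).filter (fun t => t ∉ C ∧ -t ∉ C)).card

lemma Fr_mono (C : List ℤ) {m m' : ℤ} (h : m ≤ m') : Fr C m ≤ Fr C m' :=
  Finset.card_le_card (Finset.filter_subset_filter _ (Finset.Icc_subset_Icc_right h))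

lemma Icc_eq_insert {m : ℤ} (h : 1 ≤ m) :
    Finset.Icc (1:ℤ) m = insert m (Finset.Icc 1 (m-1)) := by
  ext x; simp only [Finset.mem_Icc, Finset.mem_insert]; omega

lemma Fr_succ (C : List ℤ) {m : ℤ} (h1 : 1 ≤ m) (h2 : m ∉ C) (h3 : -m ∉ C) :
    Fr C m = Fr C (m-1) + 1 := by
  unfold Fr
  rw [Icc_eq_insert h1, Finset.filter_insert, if_pos ⟨h2, h3⟩,
    Finset.card_insert_of_notMem (by simp only [Finset.mem_filter, Finset.mem_Icc]; omega)]

lemma Fr_not_free (C : List ℤ) {m : ℤ} (h1 : 1 ≤ m) (h2 : m ∈ C ∨ -m ∈ C) :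
    Fr C m = Fr C (m-1) := by
  unfold Fr
  rw [Icc_eq_insert h1, Finset.filter_insert, if_neg (by tauto)]

lemma canSplitFrom_iff (n : ℕ) (C : List ℤ) (zs : List ℤ) :
    ∀ (prev : ℤ), (∀ z ∈ zs, z ≤ (n:ℤ)) →
      (canSplitFrom n C prev zs ↔
        ∀ i (hi : i < zs.length), zs.length - i ≤ Fr C (min prev (zs[i]'hi) - 1)) := by
  induction zs with
  | nil =>
    intro prev _
    simp only [canSplitFrom, List.length_nil]
    constructor
    · intro _ i hi; exact absurd hi (Nat.not_lt_zero i)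
    · intro _; trivial
  | cons z rest ih =>
    intro prev hle
    have hrle : ∀ w ∈ rest, w ≤ (n:ℤ) := fun w hw => hle w (List.mem_cons_of_mem _ hw)
    constructor
    · rintro ⟨t, ⟨ht1, htn, htp, htz, htC, htC'⟩, hmax, hrec⟩
      have hrest := (ih t hrle).mp hrec
      have hFt : rest.length ≤ Fr C (t - 1) := by
        cases rest with
        | nil => simp
        | cons w rs =>
          have h0 := hrest 0 (by simp)
          simp only [List.getElem_cons_zero, Nat.sub_zero, List.length_cons] at h0 ⊢
          exact le_trans h0 (Fr_mono C (by omega))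
      intro i hi
      match i with
      | 0 =>
        have h1 : Fr C t = Fr C (t-1) + 1 := Fr_succ C ht1 htC htC'
        have h2 : Fr C t ≤ Fr C (min prev z - 1) := Fr_mono C (by omega)
        simp only [List.length_cons, List.getElem_cons_zero, Nat.sub_zero]
        omega
      | (j+1 : ℕ) =>
        have hj : j < rest.length := by simpa using hi
        have hr := hrest j hj
        have hm : Fr C (min t (rest[j]'hj) - 1) ≤ Fr C (min prev (rest[j]'hj) - 1) :=
          Fr_mono C (by omega)
        simp only [List.length_cons, List.getElem_cons_succ, Nat.succ_sub_succ]
        omega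
    · intro h
      have h0 := h 0 (by simp)
      simp only [List.length_cons, List.getElem_cons_zero, Nat.sub_zero] at h0
      set S := (Finset.Icc (1:ℤ) (min prev z - 1)).filter (fun t => t ∉ C ∧ -t ∉ C) with hS
      have hcard : rest.length + 1 ≤ S.card := h0
      have hne : S.Nonempty := Finset.card_pos.mp (by omega)
      set t := S.max' hne with htdef
      have htS : t ∈ S := S.max'_mem hne
      simp only [hS, Finset.mem_filter, Finset.mem_Icc] at htS
      obtain ⟨⟨ht1, htM⟩, htC, htC'⟩ := htS
      have htp : t < prev := by omega
      have htz : t < z := by omega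
      have htn : t ≤ (n:ℤ) := le_trans (by omega) (hle z (List.mem_cons_self))
      have hsub : S ⊆ (Finset.Icc (1:ℤ) t).filter (fun t => t ∉ C ∧ -t ∉ C) := by
        intro x hx
        have hxle : x ≤ t := S.le_max' x hx
        simp only [hS, Finset.mem_filter, Finset.mem_Icc] at hx ⊢
        exact ⟨⟨hx.1.1, hxle⟩, hx.2⟩
      have hFr_t : rest.length + 1 ≤ Fr C t := le_trans hcard (Finset.card_le_card hsub)
      have hFt1 : rest.length ≤ Fr C (t - 1) := by
        have := Fr_succ C ht1 htC htC'; omega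
      refine ⟨t, ⟨ht1, htn, htp, htz, htC, htC'⟩, ?_, ?_⟩
      · intro t' h1 h2 h3 h4 h5 h6
        exact S.le_max' t'
          (by simp only [hS, Finset.mem_filter, Finset.mem_Icc]; exact ⟨⟨h1, by omega⟩, h5, h6⟩)
      · rw [ih t hrle]
        intro j hj
        rcases le_or_gt t (rest[j]'hj) with hc | hc
        · have hmin : min t (rest[j]'hj) = t := min_eq_left hc
          rw [hmin]
          exact le_trans (Nat.sub_le _ _) hFt1
        · have hj1 : j + 1 < (z :: rest).length := by simpa using Nat.succ_lt_succ hj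
          have hkey := h (j+1) hj1
          simp only [List.length_cons, List.getElem_cons_succ, Nat.succ_sub_succ] at hkey
          have hmin1 : min prev (rest[j]'hj) = rest[j]'hj := min_eq_right (by omega)
          have hmin2 : min t (rest[j]'hj) = rest[j]'hj := min_eq_right (le_of_lt hc)
          rw [hmin2, ← hmin1]
          exact hkey

lemma flatMap_cast (l : List ℕ) : (l.flatMap fun (a : ℕ) => [(a:ℤ)]) = l.map (Nat.cast : ℕ → ℤ) := by
  induction l with
  | nil => rfl
  | cons a l ih => simp only [List.flatMap_cons, ih, List.map_cons, List.singleton_append]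

lemma inner_eq (n : ℕ) : ((List.range n).map (fun v => (v + 1 : ℤ)))
    = (List.range n).map (fun v : ℕ => (v:ℤ)+1) := by
  show List.map _ ((List.range n).flatMap fun (a : ℕ) => [(a:ℤ)]) = _
  rw [flatMap_cast, List.map_map]
  rfl

lemma mem_pairedLetters (n : ℕ) (C : List ℤ) (z : ℤ) :
    z ∈ pairedLetters n C ↔ (1 ≤ z ∧ z ≤ (n:ℤ) ∧ z ∈ C ∧ -z ∈ C) := by
  unfold pairedLetters
  rw [inner_eq]
  simp only [List.mem_reverse, List.mem_filter, List.mem_map, List.mem_range,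
    decide_eq_true_eq]
  constructor
  · rintro ⟨⟨v, hv, rfl⟩, h2, h3⟩
    refine ⟨by omega, by omega, h2, h3⟩
  · rintro ⟨h1, h2, h3, h4⟩
    exact ⟨⟨(z-1).toNat, by omega, by omega⟩, h3, h4⟩

lemma pairedLetters_sorted (n : ℕ) (C : List ℤ) :
    (pairedLetters n C).Pairwise (· > ·) := by
  unfold pairedLetters
  rw [inner_eq, List.pairwise_reverse]
  exact ((List.pairwise_lt_range (n := n)).map (fun v : ℕ => (v:ℤ)+1)
    (fun a b h => by push_cast; omega)).filter _

lemma pairedLetters_nodup (n : ℕ) (C : List ℤ) : (pairedLetters n C).Nodup :=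
  (pairedLetters_sorted n C).imp (fun h => ne_of_gt h)

lemma filter_le_getElem_eq_drop : ∀ (l : List ℤ), l.Pairwise (· > ·) → ∀ (i : ℕ)
    (hi : i < l.length), l.filter (fun x => decide (x ≤ l[i])) = l.drop i
  | [], _, i, hi => by simp at hi
  | a :: l, hl, 0, hi => by
    have hf : List.filter (fun x => decide (x ≤ a)) l = l := by
      rw [List.filter_eq_self]
      intro x hx
      simp only [decide_eq_true_eq]
      exact le_of_lt (List.rel_of_pairwise_cons hl hx)
    simp only [List.getElem_cons_zero, List.drop_zero, List.filter_cons, le_refl,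
      decide_true, if_true, hf]
  | a :: l, hl, i + 1, hi => by
    have hlen : i < l.length := by simpa using hi
    have hmem : l[i] ∈ l := List.getElem_mem hlen
    have hgt : l[i] < a := List.rel_of_pairwise_cons hl hmem
    simp only [List.getElem_cons_succ, List.drop_succ_cons]
    rw [List.filter_cons_of_neg (by simp only [decide_eq_true_eq]; omega)]
    exact filter_le_getElem_eq_drop l (List.Pairwise.of_cons hl) i hlen

lemma length_filter_le_get (l : List ℤ) (hl : l.Pairwise (· > ·)) (i : ℕ) (hi : i < l.length) :
    (l.filter (fun x => decide (x ≤ l[i]))).length = l.length - i := by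
  rw [filter_le_getElem_eq_drop l hl i hi, List.length_drop]

noncomputable def P (C : List ℤ) (z : ℤ) : ℕ :=
  ((Finset.Icc 1 z).filter (fun v => v ∈ C ∧ -v ∈ C)).card

lemma P_eq (n : ℕ) (C : List ℤ) (z : ℤ) (hz : z ≤ (n:ℤ)) :
    P C z = ((pairedLetters n C).filter (fun x => decide (x ≤ z))).length := by
  have hnd := pairedLetters_nodup n C
  have hset : ((pairedLetters n C).filter (fun x => decide (x ≤ z))).toFinset
      = (Finset.Icc 1 z).filter (fun v => v ∈ C ∧ -v ∈ C) := by
    ext v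
    simp only [List.mem_toFinset, List.mem_filter, mem_pairedLetters, Finset.mem_filter,
      Finset.mem_Icc, decide_eq_true_eq]
    constructor
    · rintro ⟨⟨h1, h2, h3, h4⟩, h5⟩; exact ⟨⟨h1, h5⟩, h3, h4⟩
    · rintro ⟨⟨h1, h5⟩, h3, h4⟩; exact ⟨⟨h1, by omega, h3, h4⟩, h5⟩
  rw [P, ← hset, List.toFinset_card_of_nodup (hnd.filter _)]

lemma count_abs (n : ℕ) (C : List ℤ) (hnd : C.Nodup) (hlet : ∀ x ∈ C, isLetter n x)
    (z : ℤ) (h1 : 1 ≤ z) (hz : z ≤ (n:ℤ)) :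
    (C.filter (fun x => decide (|x| ≤ z))).length + Fr C z = z.toNat + P C z := by
  have hfin : (C.filter (fun x => decide (|x| ≤ z))).length
      = (C.toFinset.filter (fun x => |x| ≤ z)).card := by
    have h := List.toFinset_filter C (fun x => decide (|x| ≤ z))
    simp only [decide_eq_true_eq] at h
    rw [← h, List.toFinset_card_of_nodup (hnd.filter _)]
  set T := C.toFinset.filter (fun x => |x| ≤ z) with hT
  have hsplit : (T.filter (fun x => 0 < x)).card + (T.filter (fun x => ¬ 0 < x)).card
      = T.card := Finset.card_filter_add_card_filter_not _
  have hpos : T.filter (fun x => 0 < x) = (Finset.Icc (1:ℤ) z).filter (fun v => v ∈ C) := by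
    ext x
    simp only [hT, Finset.mem_filter, List.mem_toFinset, Finset.mem_Icc]
    constructor
    · rintro ⟨⟨hxC, habs⟩, hx0⟩
      rw [abs_of_pos hx0] at habs
      exact ⟨⟨hx0, habs⟩, hxC⟩
    · rintro ⟨⟨hx1, hxz⟩, hxC⟩
      have hx0 : (0:ℤ) < x := by omega
      exact ⟨⟨hxC, by rw [abs_of_pos hx0]; exact hxz⟩, hx0⟩
  have hneg : T.filter (fun x => ¬ 0 < x)
      = ((Finset.Icc (1:ℤ) z).filter (fun v => -v ∈ C)).image Neg.neg := by
    ext x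
    simp only [hT, Finset.mem_filter, List.mem_toFinset, Finset.mem_Icc, Finset.mem_image]
    constructor
    · rintro ⟨⟨hxC, habs⟩, hx0⟩
      have hlx := hlet x hxC
      rw [isLetter] at hlx
      have hx : x < 0 := by
        rcases lt_or_eq_of_le (not_lt.mp hx0) with h | h
        · exact h
        · subst h; simp at hlx
      refine ⟨-x, ⟨⟨by omega, ?_⟩, by rwa [neg_neg]⟩, by ring⟩
      · rw [abs_of_neg hx] at habs; exact habs
    · rintro ⟨v, ⟨⟨hv1, hvz⟩, hvC⟩, rfl⟩
      refine ⟨⟨hvC, ?_⟩, by omega⟩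
      rw [abs_neg, abs_of_pos (by omega : (0:ℤ) < v)]
      exact hvz
  have hnegcard : (T.filter (fun x => ¬ 0 < x)).card
      = ((Finset.Icc (1:ℤ) z).filter (fun v => -v ∈ C)).card := by
    rw [hneg, Finset.card_image_of_injective _ neg_injective]
  have hie := Finset.card_union_add_card_inter
    ((Finset.Icc (1:ℤ) z).filter (fun v => v ∈ C))
    ((Finset.Icc (1:ℤ) z).filter (fun v => -v ∈ C))
  rw [← Finset.filter_or, ← Finset.filter_and] at hie
  have hpart : ((Finset.Icc (1:ℤ) z).filter (fun v => v ∈ C ∨ -v ∈ C)).card + Fr C z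
      = z.toNat := by
    have h := Finset.card_filter_add_card_filter_not
      (s := Finset.Icc (1:ℤ) z) (p := fun v => v ∈ C ∨ -v ∈ C)
    have heq : (Finset.Icc (1:ℤ) z).filter (fun v => ¬(v ∈ C ∨ -v ∈ C))
        = (Finset.Icc (1:ℤ) z).filter (fun t => t ∉ C ∧ -t ∉ C) := by
      apply Finset.filter_congr
      intro v _
      constructor
      · intro hv; exact ⟨fun hc => hv (Or.inl hc), fun hc => hv (Or.inr hc)⟩
      · rintro ⟨ha, hb⟩ (hc | hc) <;> [exact ha hc; exact hb hc]
    rw [heq] at h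
    rw [Int.card_Icc] at h
    show _ + ((Finset.Icc (1:ℤ) z).filter (fun t => t ∉ C ∧ -t ∉ C)).card = _
    omega
  have hPdef : ((Finset.Icc (1:ℤ) z).filter (fun v => v ∈ C ∧ -v ∈ C)).card = P C z := rfl
  have hposcard : (T.filter (fun x => 0 < x)).card
      = ((Finset.Icc (1:ℤ) z).filter (fun v => v ∈ C)).card := by rw [hpos]
  omega

lemma countP_or_aux (l : List ℤ) (p q : ℤ → Bool)
    (h : ∀ x ∈ l, ¬(p x = true ∧ q x = true)) :
    l.countP (fun x => p x || q x) = l.countP p + l.countP q := by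
  induction l with
  | nil => simp
  | cons a l ih =>
    have ha := h a (List.mem_cons_self)
    have ih' := ih (fun x hx => h x (List.mem_cons_of_mem _ hx))
    simp only [List.countP_cons, ih']
    cases hp : p a <;> cases hq : q a <;> simp [hp, hq] at ha ⊢ <;> omega

lemma length_filter_add_neg (l : List ℤ) (p : ℤ → Bool) :
    (l.filter p).length + (l.filter (fun x => !p x)).length = l.length := by
  induction l with
  | nil => rfl
  | cons a l ih => cases h : p a <;> simp [List.filter_cons, h] <;> omega

lemma indexOf_eq_length_filter (f : ℤ → ℤ) :
    ∀ (l : List ℤ), l.Pairwise (fun a b => f a < f b) → ∀ a, a ∈ l →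
      l.idxOf a = (l.filter (fun x => decide (f x < f a))).length
  | [], _, a, ha => by simp at ha
  | c :: l, hp, a, ha => by
    by_cases hca : c = a
    · subst hca
      have hnil : List.filter (fun x => decide (f x < f c)) l = [] := by
        rw [List.filter_eq_nil_iff]
        intro x hx
        simp only [decide_eq_true_eq, not_lt]
        exact le_of_lt (List.rel_of_pairwise_cons hp hx)
      rw [List.idxOf_cons_self, List.filter_cons_of_neg (by simp), hnil]
      rfl
    · have hal : a ∈ l := by
        rcases List.mem_cons.mp ha with h | h
        · exact absurd h.symm hca
        · exact h
      rw [List.idxOf_cons_ne _ hca]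
      have hfc : f c < f a := List.rel_of_pairwise_cons hp hal
      rw [List.filter_cons_of_pos (by simpa using hfc)]
      simp only [List.length_cons]
      rw [indexOf_eq_length_filter f l (List.Pairwise.of_cons hp) a hal]

lemma letter_cases (n : ℕ) (x : ℤ) (h1 : 1 ≤ |x|) (h2 : |x| ≤ (n:ℤ)) :
    (1 ≤ x ∧ x ≤ (n:ℤ) ∧ |x| = x ∧ rk n x = x) ∨
    (-(n:ℤ) ≤ x ∧ x ≤ -1 ∧ |x| = -x ∧ rk n x = 2*(n:ℤ)+1+x) := by
  rcases abs_cases x with ⟨he, h0⟩ | ⟨he, h0⟩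
  · left
    rw [he] at h1 h2
    exact ⟨h1, h2, he, by rw [rk, if_pos (by omega)]⟩
  · right
    rw [he] at h1 h2
    exact ⟨by omega, by omega, he, by rw [rk, if_neg (by omega)]⟩

lemma ab_eq (n : ℕ) (C : List ℤ) (hnd : C.Nodup) (hlet : ∀ x ∈ C, isLetter n x)
    (hpw : C.Pairwise (fun a b => rk n a < rk n b))
    (z : ℤ) (hz0 : 0 < z) (hzn : z ≤ (n:ℤ)) (hzC : z ∈ C) (hzC' : -z ∈ C) :
    (C.idxOf z + 1) + (C.length - C.idxOf (-z))
      = (C.filter (fun x => decide (|x| ≤ z))).length := by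
  have hIz := indexOf_eq_length_filter (rk n) C hpw z hzC
  have hIz' := indexOf_eq_length_filter (rk n) C hpw (-z) hzC'
  have hcomp := length_filter_add_neg C (fun x => decide (rk n x < rk n (-z)))
  have hq : (C.filter (fun x => decide (|x| ≤ z))).length
      = C.countP (fun x => decide (|x| ≤ z)) := List.countP_eq_length_filter.symm
  have hp1 : (C.filter (fun x => decide (rk n x < rk n z))).length
      = C.countP (fun x => decide (rk n x < rk n z)) := List.countP_eq_length_filter.symm
  have hp2 : (C.filter (fun x => !decide (rk n x < rk n (-z)))).length
      = C.countP (fun x => !decide (rk n x < rk n (-z))) := List.countP_eq_length_filter.symm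
  have hrkz : rk n z = z := by rw [rk, if_pos hz0]
  have hrkz' : rk n (-z) = 2*(n:ℤ) + 1 - z := by rw [rk, if_neg (by omega)]; ring
  have hsplit : C.countP (fun x => decide (|x| ≤ z))
      = C.countP (fun x => decide (rk n x < rk n z))
        + (C.countP (fun x => x == z)
        + C.countP (fun x => !decide (rk n x < rk n (-z)))) := by
    rw [← countP_or_aux]
    · rw [← countP_or_aux]
      · apply List.countP_congr
        intro x hx
        obtain ⟨hlx1, hlx2⟩ := hlet x hx
        simp only [decide_eq_true_eq, Bool.or_eq_true, beq_iff_eq, Bool.not_eq_true',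
          decide_eq_false_iff_not, not_lt, hrkz, hrkz']
        rcases letter_cases n x hlx1 hlx2 with ⟨ha, hb, hc, hd⟩ | ⟨ha, hb, hc, hd⟩ <;>
          simp [hc, hd] <;> omega
      · intro x hx
        obtain ⟨hlx1, hlx2⟩ := hlet x hx
        simp only [beq_iff_eq, Bool.not_eq_true', decide_eq_false_iff_not, not_lt,
          decide_eq_true_eq, not_and, hrkz, hrkz']
        rcases letter_cases n x hlx1 hlx2 with ⟨ha, hb, hc, hd⟩ | ⟨ha, hb, hc, hd⟩ <;>
          simp [hc, hd] <;> omega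
    · intro x hx
      obtain ⟨hlx1, hlx2⟩ := hlet x hx
      simp only [beq_iff_eq, Bool.not_eq_true', decide_eq_false_iff_not, not_lt,
        decide_eq_true_eq, not_and, Bool.or_eq_true, hrkz, hrkz']
      rcases letter_cases n x hlx1 hlx2 with ⟨ha, hb, hc, hd⟩ | ⟨ha, hb, hc, hd⟩ <;>
        simp [hc, hd] <;> omega
  have hcount1 : C.countP (fun x => x == z) = 1 := by
    rw [← List.count_eq_countP]
    exact List.count_eq_one_of_mem hnd hzC
  have hle : C.idxOf (-z) ≤ C.length := List.idxOf_le_length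
  omega

/-- A strictly increasing column `C` over the type `C_n` alphabet can
be split if and only if `C` is a Kashiwara–Nakashima column of type `C_n`: for every
unbarred letter `z` such that both `z` and `z̄` appear in `C`, if `z` is in the `a`-th
box from the top and `z̄` in the `b`-th box from the bottom, then `a + b ≤ z`. -/
theorem canSplit_iff_KN {n : ℕ} (hn : 1 ≤ n) (C : List ℤ) (hC : isColumn n C) :
    canSplit n C ↔
      ∀ z : ℤ, 0 < z → z ∈ C → -z ∈ C →
        (C.idxOf z + 1) + (C.length - C.idxOf (-z)) ≤ z.toNat := by
  obtain ⟨hlet, hch⟩ := hC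
  haveI : IsTrans ℤ (fun a b => rk n a < rk n b) :=
    ⟨fun a b c h1 h2 => lt_trans h1 h2⟩
  have hpw : C.Pairwise (fun a b => rk n a < rk n b) := List.isChain_iff_pairwise.mp hch
  have hnd : C.Nodup := hpw.imp (fun h => fun hab => absurd (congrArg (rk n) hab) (ne_of_lt h))
  have hsorted := pairedLetters_sorted n C
  have hbound : ∀ z ∈ pairedLetters n C, z ≤ (n:ℤ) :=
    fun z hz => ((mem_pairedLetters n C z).mp hz).2.1
  rw [canSplit, canSplitFrom_iff n C (pairedLetters n C) ((n:ℤ)+1) hbound]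
  constructor
  · intro h z hz0 hzC hzC'
    have hzn : z ≤ (n:ℤ) := by
      have := hlet z hzC
      rw [isLetter, abs_of_pos hz0] at this
      exact this.2
    have hz1 : (1:ℤ) ≤ z := hz0
    have hzmem : z ∈ pairedLetters n C :=
      (mem_pairedLetters n C z).mpr ⟨hz1, hzn, hzC, hzC'⟩
    obtain ⟨i, hi, hzi⟩ := List.mem_iff_getElem.mp hzmem
    have hkey := h i hi
    rw [min_eq_right (by have := hbound _ (List.getElem_mem hi); omega)] at hkey
    rw [hzi] at hkey
    have hP : P C z = (pairedLetters n C).length - i := by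
      rw [P_eq n C z hzn, ← hzi]
      exact length_filter_le_get _ hsorted i hi
    have hFr : Fr C z = Fr C (z-1) := Fr_not_free C hz1 (Or.inl hzC)
    have hcount := count_abs n C hnd hlet z hz1 hzn
    have hab := ab_eq n C hnd hlet hpw z hz0 hzn hzC hzC'
    omega
  · intro h i hi
    have hzmem : (pairedLetters n C)[i] ∈ pairedLetters n C := List.getElem_mem hi
    obtain ⟨hz1, hzn, hzC, hzC'⟩ := (mem_pairedLetters n C _).mp hzmem
    have hz0 : (0:ℤ) < (pairedLetters n C)[i] := hz1
    have hkn := h _ hz0 hzC hzC'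
    rw [min_eq_right (by omega)]
    have hP : P C (pairedLetters n C)[i] = (pairedLetters n C).length - i := by
      rw [P_eq n C _ hzn]
      exact length_filter_le_get _ hsorted i hi
    have hFr : Fr C (pairedLetters n C)[i] = Fr C ((pairedLetters n C)[i] - 1) :=
      Fr_not_free C hz1 (Or.inl hzC)
    have hcount := count_abs n C hnd hlet _ hz1 hzn
    have hab := ab_eq n C hnd hlet hpw _ hz0 hzn hzC hzC'
    omega
end
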